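/- Let T ⊆ ℕ^{<ℕ} be a tree with an infinite branch α ∈ ℕ^ℕ, and set s_n = (α_1, …, α_n) for n ≥ 1 and s_0 = (). Then in ℓ¹(ℕ^{<ℕ}) ⊕ ℓ¹(ℕ^{<ℕ}), the sequence a_{s_n} ⊕ b_{s_n} converges in norm to ξ ⊕ 0, where ξ = δ_{()} + ∑_{n=1}^∞ 2^{-n} δ_{s_n}; in particular ξ ≠ 0 and ξ ⊕ 0 lies in the closed span of { a_s ⊕ b_s : s ∈ T }. -/

import Mathlib

/-- `δ_t ∈ ℓ¹(ℕ^{<ℕ})`, the indicator of the singleton `{t}`. -/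
noncomputable def deltaVec (t : List ℕ) : lp (fun _ : List ℕ => ℝ) 1 := lp.single 1 t 1

/-- `a_s = ∑_{t ⪯ s} 2^{-|t|} δ_t`. -/
noncomputable def aVec (s : List ℕ) : lp (fun _ : List ℕ => ℝ) 1 :=
  ∑ t ∈ s.inits.toFinset, (2 : ℝ) ^ (-(t.length : ℤ)) • deltaVec t

/-- `b_s = 2^{-|s|} δ_s`. -/
noncomputable def bVec (s : List ℕ) : lp (fun _ : List ℕ => ℝ) 1 :=
  (2 : ℝ) ^ (-(s.length : ℤ)) • deltaVec s

/-- `W_T`, the closed linear span of `{a_s ⊕ b_s : s ∈ T}` in `ℓ¹ ⊕ ℓ¹`. -/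
noncomputable def Wspace (T : Set (List ℕ)) :
    Set ((lp (fun _ : List ℕ => ℝ) 1) × (lp (fun _ : List ℕ => ℝ) 1)) :=
  closure ((Submodule.span ℝ ((fun s => (aVec s, bVec s)) '' T) : Submodule ℝ _) : Set _)

/-!
`a_{s_{n+1}} = a_{s_n} + 2^{-(n+1)} δ_{s_{n+1}}`, so the `a_{s_n}` are the partial sums of the
absolutely convergent series defining `ξ`, while `‖b_{s_n}‖ = 2^{-n} → 0`. The limit `ξ ⊕ 0` of
elements of `W_T` lies in the closed set `W_T`, and `ξ ≠ 0` because every `a_s` has coordinate `1`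
at the root `()`, hence so does `ξ`.
-/

open Filter Topology

lemma norm_deltaVec (t : List ℕ) : ‖deltaVec t‖ = 1 := by
  rw [deltaVec, lp.norm_single one_pos, norm_one]

lemma norm_two_zpow_neg_smul_deltaVec (k : ℕ) (t : List ℕ) :
    ‖(2 : ℝ) ^ (-(k : ℤ)) • deltaVec t‖ = (1 / 2) ^ k := by
  rw [norm_smul, norm_deltaVec, mul_one, Real.norm_of_nonneg (by positivity), zpow_neg,
    zpow_natCast, one_div, inv_pow]

lemma deltaVec_apply (t u : List ℕ) : deltaVec t u = if u = t then 1 else 0 := by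
  simp [deltaVec, lp.single_apply, Pi.single_apply]

lemma aVec_append_singleton (s : List ℕ) (a : ℕ) :
    aVec (s ++ [a]) = aVec s + (2 : ℝ) ^ (-((s.length : ℤ) + 1)) • deltaVec (s ++ [a]) := by
  have hnotmem : s ++ [a] ∉ s.inits.toFinset := by
    simpa [List.mem_inits] using fun h : s ++ [a] <+: s => by simpa using h.length_le
  have hinits : (s ++ [a]).inits.toFinset = insert (s ++ [a]) s.inits.toFinset := by
    ext t
    simp [List.inits_append, or_comm]
  rw [aVec, hinits, Finset.sum_insert hnotmem, add_comm, aVec, List.length_append,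
    List.length_singleton, Nat.cast_add, Nat.cast_one]

lemma aVec_apply_nil (s : List ℕ) : aVec s [] = 1 := by
  rw [aVec, lp.coeFn_sum, Finset.sum_apply, Finset.sum_eq_single_of_mem [] (by simp)]
  · simp [deltaVec_apply]
  · intro t _ ht
    simp [deltaVec_apply, Ne.symm ht]

lemma tendsto_bVec_zero {ι : Type*} {l : Filter ι} {t : ι → List ℕ}
    (ht : Tendsto (fun i => (t i).length) l atTop) : Tendsto (fun i => bVec (t i)) l (𝓝 0) := by
  rw [tendsto_zero_iff_norm_tendsto_zero]
  simp only [bVec, norm_two_zpow_neg_smul_deltaVec]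
  exact (tendsto_pow_atTop_nhds_zero_of_lt_one (r := (1 / 2 : ℝ)) (by norm_num)
    (by norm_num)).comp ht

lemma mem_Wspace_of_tendsto {T : Set (List ℕ)} {t : ℕ → List ℕ} (ht : ∀ n, t n ∈ T)
    {x : lp (fun _ : List ℕ => ℝ) 1 × lp (fun _ : List ℕ => ℝ) 1}
    (hx : Tendsto (fun n => (aVec (t n), bVec (t n))) atTop (𝓝 x)) : x ∈ Wspace T :=
  isClosed_closure.mem_of_tendsto hx <| Eventually.of_forall fun n =>
    subset_closure <| Submodule.subset_span ⟨t n, ht n, rfl⟩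

section Branch

variable {α : ℕ → ℕ} {s : ℕ → List ℕ}

lemma length_branch (hs : ∀ n, s n = (List.range n).map α) (n : ℕ) : (s n).length = n := by
  simp [hs]

lemma aVec_branch_eq_sum (hs : ∀ n, s n = (List.range n).map α) (n : ℕ) :
    aVec (s n) = deltaVec [] +
      ∑ k ∈ Finset.range n, (2 : ℝ) ^ (-((k : ℤ) + 1)) • deltaVec (s (k + 1)) := by
  induction n with
  | zero => simp [hs, aVec]
  | succ n ih =>
    have hsucc : s (n + 1) = s n ++ [α n] := by simp [hs, List.range_succ]
    rw [Finset.sum_range_succ, ← add_assoc, ← ih, hsucc, aVec_append_singleton,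
      length_branch hs]

end Branch

lemma summable_two_zpow_smul_deltaVec (t : ℕ → List ℕ) :
    Summable fun n : ℕ => (2 : ℝ) ^ (-((n : ℤ) + 1)) • deltaVec (t n) := by
  refine Summable.of_norm ?_
  simp only [← Nat.cast_succ, norm_two_zpow_neg_smul_deltaVec, pow_succ]
  exact summable_geometric_two.mul_right _

theorem branch_limit_mem_Wspace_general
    (T : Set (List ℕ))
    (α : ℕ → ℕ) (s : ℕ → List ℕ) (hs : ∀ n, s n = (List.range n).map α)
    (hbranch : ∀ n, s n ∈ T)
    (ξ : lp (fun _ : List ℕ => ℝ) 1)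
    (hξ : ξ = deltaVec [] + ∑' n : ℕ, (2 : ℝ) ^ (-((n : ℤ) + 1)) • deltaVec (s (n + 1))) :
    Filter.Tendsto (fun n => (aVec (s n), bVec (s n))) Filter.atTop
      (nhds (ξ, 0)) ∧ ξ ≠ 0 ∧ (ξ, (0 : lp (fun _ : List ℕ => ℝ) 1)) ∈ Wspace T := by
  have ha : Tendsto (fun n => aVec (s n)) atTop (𝓝 ξ) := by
    simp only [aVec_branch_eq_sum hs, hξ]
    exact ((summable_two_zpow_smul_deltaVec _).hasSum.tendsto_sum_nat).const_add _
  have hb : Tendsto (fun n => bVec (s n)) atTop (𝓝 0) :=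
    tendsto_bVec_zero <| by simp only [length_branch hs]; exact tendsto_id
  have hlim := ha.prodMk_nhds hb
  have hξ_nil : ξ [] = 1 :=
    tendsto_nhds_unique (((lp.lipschitzWith_one_eval 1 []).continuous.tendsto ξ).comp ha)
      (by simp only [Function.comp_def, aVec_apply_nil, tendsto_const_nhds])
  refine ⟨hlim, fun h => ?_, mem_Wspace_of_tendsto hbranch hlim⟩
  simp [h] at hξ_nil

/-- Along an infinite branch `α` of a tree `T`, with `s_n = (α_1,…,α_n)`, the
vectors `a_{s_n} ⊕ b_{s_n}` converge in norm to `ξ ⊕ 0`, where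
`ξ = δ_{()} + ∑_{n≥1} 2^{-n} δ_{s_n} ≠ 0`; in particular `ξ ⊕ 0 ∈ W_T`. -/
theorem branch_limit_mem_Wspace
    (T : Set (List ℕ)) (hT : ∀ s ∈ T, ∀ t : List ℕ, t <+: s → t ∈ T)
    (α : ℕ → ℕ) (s : ℕ → List ℕ) (hs : ∀ n, s n = (List.range n).map α)
    (hbranch : ∀ n, s n ∈ T)
    (ξ : lp (fun _ : List ℕ => ℝ) 1)
    (hξ : ξ = deltaVec [] + ∑' n : ℕ, (2 : ℝ) ^ (-((n : ℤ) + 1)) • deltaVec (s (n + 1))) :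
    Filter.Tendsto (fun n => (aVec (s n), bVec (s n))) Filter.atTop
      (nhds (ξ, 0)) ∧ ξ ≠ 0 ∧ (ξ, (0 : lp (fun _ : List ℕ => ℝ) 1)) ∈ Wspace T :=
  branch_limit_mem_Wspace_general T α s hs hbranch ξ hξ
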